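/- arXiv:1707.07156 — 2 statements merged into one kernel-verified Lean document; each statement's English description precedes it below -/
import Mathlib

section
/- Let K12, K21 < 0 with 4 - K12*K21 > 0, let γ1, γ2 ≥ 0, and let σ1, σ2 ≥ 0 with (σ1,σ2) ≠ (0,0) satisfy the Pohozaev identity K21*σ1² + K12*K21*σ1*σ2 + K12*σ2² = 2*K21*(1+γ1)*σ1 + 2*K12*(1+γ2)*σ2. Then either 2*σ1 - 2*γ1 + K12*σ2 ≥ 2 or 2*σ2 - 2*γ2 + K21*σ1 ≥ 2. -/
theorem stmt_1 (K12 K21 : ℝ) (h12 : K12 < 0) (h21 : K21 < 0)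
    (hdet : 4 - K12 * K21 > 0) (γ1 γ2 σ1 σ2 : ℝ)
    (hγ1 : 0 ≤ γ1) (hγ2 : 0 ≤ γ2) (hσ1 : 0 ≤ σ1) (hσ2 : 0 ≤ σ2)
    (hne : (σ1, σ2) ≠ (0, 0))
    (hpoho : K21 * σ1 ^ 2 + K12 * K21 * σ1 * σ2 + K12 * σ2 ^ 2 =
      2 * K21 * (1 + γ1) * σ1 + 2 * K12 * (1 + γ2) * σ2) :
    2 * σ1 - 2 * γ1 + K12 * σ2 ≥ 2 ∨ 2 * σ2 - 2 * γ2 + K21 * σ1 ≥ 2 := by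
  by_contra h
  push_neg at h
  obtain ⟨h1, h2⟩ := h
  have hA : 2 * σ1 + K12 * σ2 - 4 - 4 * γ1 < 0 := by linarith
  have hB : 2 * σ2 + K21 * σ1 - 4 - 4 * γ2 < 0 := by linarith
  have key : K21 * σ1 * (2 * σ1 + K12 * σ2 - 4 - 4 * γ1)
      + K12 * σ2 * (2 * σ2 + K21 * σ1 - 4 - 4 * γ2) = 0 := by
    linear_combination 2 * hpoho
  have t1 : 0 ≤ K21 * σ1 * (2 * σ1 + K12 * σ2 - 4 - 4 * γ1) :=
    by nlinarith [mul_nonpos_of_nonpos_of_nonneg h21.le hσ1, hA]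
  have t2 : 0 ≤ K12 * σ2 * (2 * σ2 + K21 * σ1 - 4 - 4 * γ2) :=
    by nlinarith [mul_nonpos_of_nonpos_of_nonneg h12.le hσ2, hB]
  have e1 : σ1 * (K21 * (2 * σ1 + K12 * σ2 - 4 - 4 * γ1)) = 0 := by
    nlinarith [key, t1, t2]
  have e2 : σ2 * (K12 * (2 * σ2 + K21 * σ1 - 4 - 4 * γ2)) = 0 := by
    nlinarith [key, t1, t2]
  have p1 : 0 < K21 * (2 * σ1 + K12 * σ2 - 4 - 4 * γ1) := mul_pos_of_neg_of_neg h21 hA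
  have p2 : 0 < K12 * (2 * σ2 + K21 * σ1 - 4 - 4 * γ2) := mul_pos_of_neg_of_neg h12 hB
  have hs1 : σ1 = 0 := (mul_eq_zero.1 e1).resolve_right p1.ne'
  have hs2 : σ2 = 0 := (mul_eq_zero.1 e2).resolve_right p2.ne'
  exact hne (by simp [hs1, hs2])
end

section
/- Let n ≥ 1 and let q_1, …, q_n be distinct points of ℝ² ≅ ℂ, all different from 0 and from a fixed point e with |e| = 1, and let α ≥ 0 and K21 < 0 be reals. Suppose for each i: 2*Σ_{j≠i} (q_j - q_i)/|q_j - q_i|² + α*q_i/|q_i|² - K21*(q_i - e)/|q_i - e|² = 0 (as vectors in ℝ²). Then Σ_{i=1}^{n} Re(K21*e/(q_i - e)) = -n*(n-1) + (α - K21)*n, where the quotient is taken in ℂ. -/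
/-!
Since `z / |z|² = 1 / z̄`, the conjugate of each vector equation is the holomorphic identity
`2 ∑_{j ≠ i} 1/(q_j - q_i) + α/q_i - K21/(q_i - e) = 0`. Multiplying it by `q_i`, using
`q_i/(q_i - e) = 1 + e/(q_i - e)` and summing over `i` leaves the double sum
`∑_i ∑_{j ≠ i} q_i/(q_j - q_i)`, which equals `-n(n-1)/2` because the terms for `(i, j)` and
`(j, i)` add up to `-1`. The resulting identity holds in `ℂ`, so taking real parts is harmless.
-/

open Finset ComplexConjugate

theorem Complex.div_normSq_eq_inv_conj (z : ℂ) : z / (Complex.normSq z : ℂ) = (conj z)⁻¹ := by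
  rw [Complex.inv_def, Complex.normSq_conj, Complex.conj_conj, div_eq_mul_inv, Complex.ofReal_inv]

section Field

variable {K ι : Type*} [Field K] [Fintype ι] [DecidableEq ι]

theorem two_mul_sum_sum_erase_div_sub {q : ι → K} (hq : Function.Injective q) :
    2 * ∑ i, ∑ j ∈ univ.erase i, q i / (q j - q i)
      = -((Fintype.card ι : K) * ((Fintype.card ι : K) - 1)) := by
  have hswap : ∑ i, ∑ j ∈ univ.erase i, q i / (q j - q i)
      = ∑ i, ∑ j ∈ univ.erase i, q j / (q i - q j) :=
    sum_comm' (by simp [eq_comm])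
  have hpair : ∀ i, ∀ j ∈ univ.erase i, q i / (q j - q i) + q j / (q i - q j) = -1 := by
    intro i j hj
    have hji : q j - q i ≠ 0 := sub_ne_zero.mpr (hq.ne (ne_of_mem_erase hj))
    rw [← neg_sub (q j), div_neg, ← sub_eq_add_neg, ← sub_div, div_eq_iff hji]
    ring
  have hcard : ∀ i : ι, ((univ.erase i).card : K) = (Fintype.card ι : K) - 1 := fun i => by
    rw [card_erase_of_mem (mem_univ i), card_univ, Nat.cast_pred (Fintype.card_pos_iff.mpr ⟨i⟩)]
  calc 2 * ∑ i, ∑ j ∈ univ.erase i, q i / (q j - q i)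
      = ∑ i, ∑ j ∈ univ.erase i, (q i / (q j - q i) + q j / (q i - q j)) := by
        rw [two_mul]; nth_rewrite 2 [hswap]; simp only [← sum_add_distrib]
    _ = ∑ i : ι, -((Fintype.card ι : K) - 1) := by
        refine sum_congr rfl fun i _ => ?_
        rw [sum_congr rfl (hpair i), sum_const, nsmul_eq_mul, hcard]
        ring
    _ = -((Fintype.card ι : K) * ((Fintype.card ι : K) - 1)) := by
        simp only [sum_const, card_univ, nsmul_eq_mul, mul_neg]

theorem sum_mul_div_sub_eq_of_equilibrium {q : ι → K} (hq : Function.Injective q)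
    {a b e : K} (h0 : ∀ i, q i ≠ 0) (hqe : ∀ i, q i ≠ e)
    (heq : ∀ i, 2 * ∑ j ∈ univ.erase i, (q j - q i)⁻¹ + a / q i - b / (q i - e) = 0) :
    ∑ i, b * e / (q i - e)
      = -((Fintype.card ι : K) * ((Fintype.card ι : K) - 1)) + (a - b) * Fintype.card ι := by
  have hmul : ∀ i, 2 * ∑ j ∈ univ.erase i, q i / (q j - q i) + (a - b) - b * e / (q i - e)
      = q i * (2 * ∑ j ∈ univ.erase i, (q j - q i)⁻¹ + a / q i - b / (q i - e)) := by
    intro i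
    have hsub : q i - e ≠ 0 := sub_ne_zero.mpr (hqe i)
    simp only [mul_sub, mul_add, mul_sum, ← div_eq_mul_inv]
    field_simp [h0 i]
    ring
  have hsum : 2 * ∑ i, ∑ j ∈ univ.erase i, q i / (q j - q i)
      + (a - b) * Fintype.card ι - ∑ i, b * e / (q i - e) = 0 := calc
    _ = ∑ i, (2 * ∑ j ∈ univ.erase i, q i / (q j - q i) + (a - b) - b * e / (q i - e)) := by
      simp only [sum_sub_distrib, sum_add_distrib, mul_sum, sum_const, card_univ, nsmul_eq_mul,
        mul_comm (Fintype.card ι : K), sub_mul]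
    _ = 0 := by simp only [hmul, heq, mul_zero, sum_const_zero]
  rw [two_mul_sum_sum_erase_div_sub hq] at hsum
  linear_combination -hsum

end Field

open Finset in
theorem stmt_5_general (n : ℕ) (q : Fin n → ℂ) (hq : Function.Injective q)
    (e : ℂ) (α K21 : ℝ)
    (h0 : ∀ i, q i ≠ 0) (hqe : ∀ i, q i ≠ e)
    (hloc : ∀ i, 2 * ∑ j ∈ univ.erase i, (q j - q i) / (Complex.normSq (q j - q i) : ℂ)
        + (α : ℂ) * q i / (Complex.normSq (q i) : ℂ)
        - (K21 : ℂ) * (q i - e) / (Complex.normSq (q i - e) : ℂ) = 0) :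
    (∑ i, (K21 : ℂ) * e / (q i - e)).re
      = -((n : ℝ) * ((n : ℝ) - 1)) + (α - K21) * (n : ℝ) := by
  have hholo : ∀ i, 2 * ∑ j ∈ univ.erase i, (q j - q i)⁻¹
      + (α : ℂ) / q i - (K21 : ℂ) / (q i - e) = 0 := by
    intro i
    have hconj := hloc i
    simp only [mul_div_assoc, Complex.div_normSq_eq_inv_conj] at hconj
    rw [← map_eq_zero (starRingEnd ℂ), ← hconj]
    simp only [map_sub, map_add, map_mul, map_sum, map_inv₀, map_ofNat, Complex.conj_ofReal,
      div_eq_mul_inv]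
  rw [sum_mul_div_sub_eq_of_equilibrium hq h0 hqe hholo, Fintype.card_fin]
  norm_cast

open Finset in
theorem stmt_5 (n : ℕ) (hn : 1 ≤ n) (q : Fin n → ℂ) (hq : Function.Injective q)
    (e : ℂ) (he : ‖e‖ = 1) (α K21 : ℝ) (hα : 0 ≤ α) (hK : K21 < 0)
    (h0 : ∀ i, q i ≠ 0) (hqe : ∀ i, q i ≠ e)
    (hloc : ∀ i, 2 * ∑ j ∈ univ.erase i, (q j - q i) / (Complex.normSq (q j - q i) : ℂ)
        + (α : ℂ) * q i / (Complex.normSq (q i) : ℂ)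
        - (K21 : ℂ) * (q i - e) / (Complex.normSq (q i - e) : ℂ) = 0) :
    (∑ i, (K21 : ℂ) * e / (q i - e)).re
      = -((n : ℝ) * ((n : ℝ) - 1)) + (α - K21) * (n : ℝ) :=
  stmt_5_general n q hq e α K21 h0 hqe hloc
end
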